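/- A c.e. subset A of ℕ is D-maximal and Type 4 if and only if A is Herrmann, i.e., A is D-maximal and strongly r-separable. -/

import Mathlib

open Set Function

/-- A set of naturals is computably enumerable (c.e.) -/
def CESet (A : Set ℕ) : Prop := REPred (· ∈ A)

/-- A set of naturals is computable -/
def ComputableSet (A : Set ℕ) : Prop := ComputablePred (· ∈ A)

/-- X ⊆* Y : X is almost contained in Y -/
def SubsetStar (X Y : Set ℕ) : Prop := (X \ Y).Finite

/-- X =* Y : X and Y differ by a finite set -/
def EqStar (X Y : Set ℕ) : Prop := (X \ Y).Finite ∧ (Y \ X).Finite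

/-- G is a generating set for 𝒟(A): a countable family of c.e. sets, each disjoint
from A, such that every c.e. set disjoint from A is almost covered by finitely many
members of G. -/
def Generates (A : Set ℕ) (G : Set (Set ℕ)) : Prop :=
  G.Countable ∧ (∀ X ∈ G, CESet X) ∧ (∀ X ∈ G, Disjoint X A) ∧
  ∀ D : Set ℕ, CESet D → Disjoint D A →
    ∃ F : Set (Set ℕ), F ⊆ G ∧ F.Finite ∧ SubsetStar D (⋃₀ F)

/-- S is simple -/
def SimpleSet (S : Set ℕ) : Prop :=
  CESet S ∧ Sᶜ.Infinite ∧ ∀ W : Set ℕ, CESet W → Disjoint W S → W.Finite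

/-- A is 𝒟-maximal -/
def DMaximal (A : Set ℕ) : Prop :=
  CESet A ∧ ∀ W : Set ℕ, CESet W → ∃ D : Set ℕ, CESet D ∧ Disjoint D A ∧
    (SubsetStar W (A ∪ D) ∨ EqStar (W ∪ A ∪ D) Set.univ)

/-- M is r-maximal -/
def RMaximal (M : Set ℕ) : Prop :=
  CESet M ∧ Mᶜ.Infinite ∧
    ∀ R : Set ℕ, ComputableSet R → (R ∩ Mᶜ).Finite ∨ (Rᶜ ∩ Mᶜ).Finite

/-- M is maximal -/
def MaximalSet (M : Set ℕ) : Prop :=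
  CESet M ∧ Mᶜ.Infinite ∧
    ∀ W : Set ℕ, CESet W → M ⊆ W → (W \ M).Finite ∨ Wᶜ.Finite

/-- B is atomless -/
def AtomlessSet (B : Set ℕ) : Prop :=
  ∀ C : Set ℕ, CESet C → B ⊆ C → Cᶜ.Infinite →
    ∃ E : Set ℕ, CESet E ∧ SubsetStar C E ∧ (E \ C).Infinite ∧ Eᶜ.Infinite

/-- A0, A1 form a Friedberg splitting of A -/
def FriedbergSplitting (A0 A1 A : Set ℕ) : Prop :=
  CESet A0 ∧ CESet A1 ∧ Disjoint A0 A1 ∧ A0 ∪ A1 = A ∧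
    ∀ W : Set ℕ, CESet W → ¬ CESet (W \ A) → ¬ CESet (W \ A0) ∧ ¬ CESet (W \ A1)

/-- E is a major subset of D -/
def MajorIn (E D : Set ℕ) : Prop :=
  CESet E ∧ CESet D ∧ E ⊆ D ∧ (D \ E).Infinite ∧
    ∀ W : Set ℕ, CESet W → SubsetStar Dᶜ W → SubsetStar Eᶜ W

/-- H is hh-simple: the lattice of c.e. supersets of H mod finite is a boolean algebra -/
def HHSimple (H : Set ℕ) : Prop :=
  CESet H ∧ Hᶜ.Infinite ∧
    ∀ W : Set ℕ, CESet W → ∃ V : Set ℕ, CESet V ∧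
      EqStar ((W ∪ H) ∩ (V ∪ H)) H ∧ EqStar (W ∪ V ∪ H) Set.univ

/-- A is strongly r-separable -/
def StronglyRSeparable (A : Set ℕ) : Prop :=
  ∀ B : Set ℕ, CESet B → Disjoint B A →
    ∃ C : Set ℕ, ComputableSet C ∧ B ⊆ C ∧ Disjoint C A ∧ (C \ B).Infinite

/-- Structure of a Type 5 generating family: D0 together with the R_i. -/
def Type5Family (D0 : Set ℕ) (R : ℕ → Set ℕ) : Prop :=
  CESet D0 ∧ ¬ ComputableSet D0 ∧ D0.Infinite ∧
  Function.Injective R ∧ (∀ i, D0 ≠ R i) ∧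
  (∀ i, ComputableSet (R i) ∧ (R i).Infinite) ∧
  Pairwise (Function.onFun Disjoint R) ∧
  (∀ i, Disjoint D0 (R i))

/-- Structure of a Type 7 generating family: D0 together with the R_i. -/
def Type7Family (D0 : Set ℕ) (R : ℕ → Set ℕ) : Prop :=
  CESet D0 ∧ ¬ ComputableSet D0 ∧
  Function.Injective R ∧ (∀ i, D0 ≠ R i) ∧
  (∀ i, ComputableSet (R i) ∧ (R i).Infinite) ∧
  Pairwise (Function.onFun Disjoint R) ∧
  {i : ℕ | (D0 ∩ R i).Nonempty}.Infinite

/-- Structure of a Type 8 generating family: the D_i together with the R_i. -/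
def Type8Family (D R : ℕ → Set ℕ) : Prop :=
  Function.Injective D ∧ Function.Injective R ∧ (∀ i j, D i ≠ R j) ∧
  (∀ i, CESet (D i) ∧ ¬ ComputableSet (D i)) ∧
  Pairwise (Function.onFun Disjoint D) ∧
  (∀ i, ComputableSet (R i) ∧ (R i).Infinite) ∧
  Pairwise (Function.onFun Disjoint R)

/-- Structure of a Type 9 generating family: the nested D_i together with the R_i. -/
def Type9Family (D R : ℕ → Set ℕ) : Prop :=
  Function.Injective R ∧ (∀ i j, D i ≠ R j) ∧
  (∀ i, ComputableSet (R i) ∧ (R i).Infinite) ∧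
  Pairwise (Function.onFun Disjoint R) ∧
  (∀ i, CESet (D i) ∧ ¬ ComputableSet (D i) ∧ (D i).Infinite) ∧
  (∀ l, D l ⊆ D (l + 1)) ∧
  (∀ l, ¬ CESet (D (l + 1) \ D l)) ∧
  (∀ l, {j : ℕ | (R j \ D l).Infinite}.Infinite)

def IsType1 (G : Set (Set ℕ)) : Prop := G = {∅}

def IsType2 (G : Set (Set ℕ)) : Prop :=
  ∃ R : Set ℕ, G = {R} ∧ ComputableSet R ∧ R.Infinite

def IsType3 (G : Set (Set ℕ)) : Prop :=
  ∃ W : Set ℕ, G = {W} ∧ CESet W ∧ ¬ ComputableSet W ∧ W.Infinite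

def IsType4 (G : Set (Set ℕ)) : Prop :=
  ∃ R : ℕ → Set ℕ, G = Set.range R ∧ Function.Injective R ∧
    (∀ i, ComputableSet (R i) ∧ (R i).Infinite) ∧
    Pairwise (Function.onFun Disjoint R)

def IsType5 (G : Set (Set ℕ)) : Prop :=
  ∃ (D0 : Set ℕ) (R : ℕ → Set ℕ), G = insert D0 (Set.range R) ∧ Type5Family D0 R

def IsType6 (G : Set (Set ℕ)) : Prop :=
  ∃ D : ℕ → Set ℕ, G = Set.range D ∧ Function.Injective D ∧
    (∀ i, CESet (D i) ∧ ¬ ComputableSet (D i) ∧ (D i).Infinite) ∧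
    Pairwise (Function.onFun Disjoint D)

def IsType7 (G : Set (Set ℕ)) : Prop :=
  ∃ (D0 : Set ℕ) (R : ℕ → Set ℕ), G = insert D0 (Set.range R) ∧ Type7Family D0 R

def IsType8 (G : Set (Set ℕ)) : Prop :=
  ∃ D R : ℕ → Set ℕ, G = Set.range D ∪ Set.range R ∧ Type8Family D R

def IsType9 (G : Set (Set ℕ)) : Prop :=
  ∃ D R : ℕ → Set ℕ, G = Set.range D ∪ Set.range R ∧ Type9Family D R

def IsType10 (G : Set (Set ℕ)) : Prop :=
  ∃ D : ℕ → Set ℕ, G = Set.range D ∧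
    (∀ i, CESet (D i) ∧ ¬ ComputableSet (D i) ∧ (D i).Infinite) ∧
    (∀ l, D l ⊆ D (l + 1)) ∧
    (∀ l, ¬ CESet (D (l + 1) \ D l))

/-- G is a generating set of Type n (n = 1, …, 10). -/
def GenTypeN (n : ℕ) (G : Set (Set ℕ)) : Prop :=
  match n with
  | 1 => IsType1 G
  | 2 => IsType2 G
  | 3 => IsType3 G
  | 4 => IsType4 G
  | 5 => IsType5 G
  | 6 => IsType6 G
  | 7 => IsType7 G
  | 8 => IsType8 G
  | 9 => IsType9 G
  | 10 => IsType10 G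
  | _ => False

/-- The c.e. set A is of Type n: 𝒟(A) has a generating set of Type n
but no generating set of any Type m < n. -/
def SetOfType (A : Set ℕ) (n : ℕ) : Prop :=
  (∃ G : Set (Set ℕ), Generates A G ∧ GenTypeN n G) ∧
  ∀ m : ℕ, m < n → ¬ ∃ G : Set (Set ℕ), Generates A G ∧ GenTypeN m G

/-- (F_i) is an A-special list. -/
def ASpecialList (A : Set ℕ) (F : ℕ → Set ℕ) : Prop :=
  F 0 = A ∧ (∀ i, CESet (F i) ∧ ¬ ComputableSet (F i)) ∧
  Pairwise (Function.onFun Disjoint F) ∧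
  ∀ W : Set ℕ, CESet W → ∃ i : ℕ,
    SubsetStar W (⋃ l ≤ i, F l) ∨ EqStar (W ∪ ⋃ l ≤ i, F l) Set.univ

/-!
A Type 4 generating family `R` makes `A` strongly r-separable: a c.e. set `B` disjoint from `A`
is almost covered by finitely many `R i`, and adding one further `R j` together with the finitely
many uncovered points of `B` gives a computable separator `C` with `C \ B` infinite.

Conversely, strong r-separability excludes generating sets `{S}` (Types 1–3): `S` extends to a
computable `C` disjoint from `A` with `C \ S` infinite, which `S` does not almost cover. For a
Type 4 generating set, enumerate the c.e. sets `B k` disjoint from `A` and use strong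
r-separability to grow a chain `∅ = E 0 ⊆ E 1 ⊆ ⋯` of computable sets disjoint from `A` with
`E k ∪ B k ⊆ E (k + 1)` and `E (k + 1) \ E k` infinite; the differences `E (k + 1) \ E k` form
the generating set.
-/

section Computability

variable {α : Type*} [Primcodable α] {p q : α → Prop}

protected theorem ComputablePred.or (hp : ComputablePred p) (hq : ComputablePred q) :
    ComputablePred fun a => p a ∨ q a := by
  classical
  exact Computable.computablePred <|
    (Primrec.or.to_comp.comp hp.decide hq.decide).of_eq fun a => by simp

protected theorem ComputablePred.and (hp : ComputablePred p) (hq : ComputablePred q) :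
    ComputablePred fun a => p a ∧ q a := by
  classical
  exact Computable.computablePred <|
    (Primrec.and.to_comp.comp hp.decide hq.decide).of_eq fun a => by simp

protected theorem REPred.or (hp : REPred p) (hq : REPred q) : REPred fun a => p a ∨ q a := by
  obtain ⟨k, hk, hdom⟩ := Partrec.merge' hp hq
  exact hk.dom_re.of_eq fun a => by simpa [Part.assert] using (hdom a).2

end Computability

theorem ComputableSet.ceSet {X : Set ℕ} (hX : ComputableSet X) : CESet X := ComputablePred.to_re hX

theorem ComputableSet.union {X Y : Set ℕ} (hX : ComputableSet X) (hY : ComputableSet Y) :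
    ComputableSet (X ∪ Y) :=
  ComputablePred.or hX hY

theorem ComputableSet.diff {X Y : Set ℕ} (hX : ComputableSet X) (hY : ComputableSet Y) :
    ComputableSet (X \ Y) :=
  ComputablePred.and hX (ComputablePred.not hY)

theorem CESet.union {X Y : Set ℕ} (hX : CESet X) (hY : CESet Y) : CESet (X ∪ Y) :=
  REPred.or hX hY

theorem Set.Finite.computableSet {X : Set ℕ} (hX : X.Finite) : ComputableSet X := by
  classical
  obtain ⟨s, rfl⟩ := hX.exists_finset_coe
  exact ((PrimrecRel.exists_mem_list Primrec.eq).comp (Primrec.const s.toList) Primrec.id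
    |>.computablePred).of_eq fun n => by simp

theorem Set.Finite.computableSet_sUnion {F : Set (Set ℕ)} (hF : F.Finite)
    (h : ∀ X ∈ F, ComputableSet X) : ComputableSet (⋃₀ F) := by
  induction F, hF using Set.Finite.induction_on with
  | empty => simpa using Set.finite_empty.computableSet
  | insert _ _ ih =>
    rw [Set.sUnion_insert]
    exact (h _ (mem_insert _ _)).union (ih fun X hX => h X (mem_insert_of_mem _ hX))

theorem countable_setOf_ceSet : {D : Set ℕ | CESet D}.Countable := by
  let code : {D : Set ℕ // CESet D} → {f : ℕ →. ℕ // Partrec f} := fun D =>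
    ⟨fun a => (Part.assert (a ∈ D.1) fun _ => Part.some ()).map fun _ => 0,
      D.2.map (Computable.const 0).to₂⟩
  have hcode : Function.Injective code := fun D E h => Subtype.ext <| Set.ext fun a => by
    simpa [code, Part.assert] using congrArg (fun f => (f.1 a).Dom) h
  exact Set.countable_coe_iff.1 hcode.countable

theorem exists_lt_mem_sdiff_succ {α : Type*} {E : ℕ → Set α} (h0 : E 0 = ∅) {x : α} :
    ∀ {n : ℕ}, x ∈ E n → ∃ i < n, x ∈ E (i + 1) \ E i
  | 0, hx => by simp [h0] at hx
  | n + 1, hx => by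
    by_cases hxn : x ∈ E n
    · obtain ⟨i, hi, hxi⟩ := exists_lt_mem_sdiff_succ h0 hxn
      exact ⟨i, hi.trans n.lt_succ_self, hxi⟩
    · exact ⟨n, n.lt_succ_self, hx, hxn⟩

namespace StronglyRSeparable

variable {A : Set ℕ}

theorem of_generates_isType4 {G : Set (Set ℕ)} (hG : Generates A G)
    (h4 : IsType4 G) : StronglyRSeparable A := by
  obtain ⟨R, rfl, hRinj, hR, hRdisj⟩ := h4
  obtain ⟨-, -, hRA, hcover⟩ := hG
  intro B hB hBA
  obtain ⟨F, hFR, hF, hBF⟩ := hcover B hB hBA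
  obtain ⟨j, hj⟩ := (hF.preimage hRinj.injOn).infinite_compl.nonempty
  have hRjF : Disjoint (R j) (⋃₀ F) := by
    refine Set.disjoint_sUnion_right.2 fun X hX => ?_
    obtain ⟨i, rfl⟩ := hFR hX
    exact hRdisj (by rintro rfl; exact hj hX)
  refine ⟨⋃₀ F ∪ (B \ ⋃₀ F) ∪ R j, ?_, ?_, ?_, ?_⟩
  · refine ((hF.computableSet_sUnion fun X hX => ?_).union hBF.computableSet).union (hR j).1
    obtain ⟨i, rfl⟩ := hFR hX
    exact (hR i).1
  · intro x hx
    by_cases hxF : x ∈ ⋃₀ F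
    · exact Or.inl (Or.inl hxF)
    · exact Or.inl (Or.inr ⟨hx, hxF⟩)
  · refine Disjoint.union_left (Disjoint.union_left ?_ (hBA.mono_left sdiff_subset))
      (hRA _ ⟨j, rfl⟩)
    exact Set.disjoint_sUnion_left.2 fun X hX => hRA X (hFR hX)
  · refine ((hR j).2.sdiff hBF).mono fun x hx => ⟨Or.inr hx.1, fun hxB => hx.2 ⟨hxB, ?_⟩⟩
    exact Set.disjoint_left.1 hRjF hx.1

theorem not_generates_singleton (hA : StronglyRSeparable A) (S : Set ℕ) :
    ¬ Generates A {S} := by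
  rintro ⟨-, hce, hSA, hcover⟩
  obtain ⟨C, hC, -, hCA, hCS⟩ := hA S (hce S rfl) (hSA S rfl)
  obtain ⟨F, hFS, -, hCF⟩ := hcover C hC.ceSet hCA
  exact hCS (hCF.subset (sdiff_subset_sdiff_right (sUnion_subset fun X hX => (hFS hX).le)))

theorem not_generates_of_lt_four (hA : StronglyRSeparable A) :
    ∀ m < 4, ¬ ∃ G, Generates A G ∧ GenTypeN m G := by
  rintro m hm ⟨G, hG, hGm⟩
  interval_cases m
  · exact hGm
  · exact hA.not_generates_singleton ∅ (hGm ▸ hG)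
  · obtain ⟨R, rfl, -⟩ := (hGm : IsType2 G)
    exact hA.not_generates_singleton R hG
  · obtain ⟨W, rfl, -⟩ := (hGm : IsType3 G)
    exact hA.not_generates_singleton W hG

theorem exists_chain (hA : StronglyRSeparable A) {B : ℕ → Set ℕ}
    (hB : ∀ k, CESet (B k) ∧ Disjoint (B k) A) :
    ∃ E : ℕ → Set ℕ, E 0 = ∅ ∧ ∀ k, ComputableSet (E k) ∧ Disjoint (E k) A ∧
      E k ∪ B k ⊆ E (k + 1) ∧ (E (k + 1) \ E k).Infinite := by
  have step : ∀ (C : {C : Set ℕ // ComputableSet C ∧ Disjoint C A}) (k : ℕ),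
      ∃ C' : {C : Set ℕ // ComputableSet C ∧ Disjoint C A},
        C.1 ∪ B k ⊆ C'.1 ∧ (C'.1 \ C.1).Infinite := by
    rintro ⟨C, hC, hCA⟩ k
    obtain ⟨C', hC', hsub, hC'A, hinf⟩ :=
      hA _ (hC.ceSet.union (hB k).1) (disjoint_union_left.2 ⟨hCA, (hB k).2⟩)
    exact ⟨⟨C', hC', hC'A⟩, hsub, hinf.mono (sdiff_subset_sdiff_right subset_union_left)⟩
  choose next hnext using step
  let E : ℕ → {C : Set ℕ // ComputableSet C ∧ Disjoint C A} := fun n =>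
    Nat.rec ⟨∅, finite_empty.computableSet, empty_disjoint _⟩ (fun k C => next C k) n
  exact ⟨fun n => (E n).1, rfl, fun k => ⟨(E k).2.1, (E k).2.2, hnext (E k) k⟩⟩

theorem exists_generates_isType4 (hA : StronglyRSeparable A) :
    ∃ G, Generates A G ∧ IsType4 G := by
  have hcount : {D : Set ℕ | CESet D ∧ Disjoint D A}.Countable :=
    countable_setOf_ceSet.mono fun D hD => hD.1
  obtain ⟨B, hB⟩ := hcount.exists_eq_range
    ⟨∅, finite_empty.computableSet.ceSet, empty_disjoint _⟩
  obtain ⟨E, hE0, hE⟩ := hA.exists_chain fun k => hB.symm.subset (mem_range_self k)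
  have hmono : Monotone E :=
    monotone_nat_of_le_succ fun k => subset_union_left.trans (hE k).2.2.1
  set R : ℕ → Set ℕ := fun k => E (k + 1) \ E k
  have hR : ∀ k, ComputableSet (R k) ∧ (R k).Infinite :=
    fun k => ⟨(hE (k + 1)).1.diff (hE k).1, (hE k).2.2.2⟩
  have hRdisj : Pairwise (Disjoint on R) := by
    simpa only [R, ← hmono.disjointed_add_one] using
      (disjoint_disjointed E).comp_of_injective (add_left_injective 1)
  have hRinj : Function.Injective R := Function.injective_iff_pairwise_ne.2
    fun i j hij => (hRdisj hij).ne (hR i).2.nonempty.ne_empty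
  refine ⟨range R, ⟨countable_range R, ?_, ?_, ?_⟩, R, rfl, hRinj, hR, hRdisj⟩
  · rintro _ ⟨k, rfl⟩
    exact (hR k).1.ceSet
  · rintro _ ⟨k, rfl⟩
    exact (hE (k + 1)).2.1.mono_left sdiff_subset
  · intro D hD hDA
    obtain ⟨k, rfl⟩ : D ∈ range B := hB.subset ⟨hD, hDA⟩
    refine ⟨R '' Iio (k + 1), image_subset_range _ _, (finite_Iio _).image R, ?_⟩
    suffices B k ⊆ ⋃₀ (R '' Iio (k + 1)) by
      rw [SubsetStar, sdiff_eq_empty.2 this]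
      exact finite_empty
    intro x hx
    obtain ⟨i, hi, hxi⟩ := exists_lt_mem_sdiff_succ hE0 ((hE k).2.2.1 (subset_union_right hx))
    exact ⟨R i, mem_image_of_mem R hi, hxi⟩

end StronglyRSeparable

theorem setOfType_four_iff_stronglyRSeparable {A : Set ℕ} :
    SetOfType A 4 ↔ StronglyRSeparable A :=
  ⟨fun ⟨⟨_, hG, h4⟩, _⟩ => .of_generates_isType4 hG h4,
    fun hA => ⟨hA.exists_generates_isType4, hA.not_generates_of_lt_four⟩⟩

theorem stmt_17_general (A : Set ℕ) :
    (DMaximal A ∧ SetOfType A 4) ↔ (DMaximal A ∧ StronglyRSeparable A) :=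
  and_congr_right fun _ => setOfType_four_iff_stronglyRSeparable

theorem stmt_17 (A : Set ℕ) (hA : CESet A) :
    (DMaximal A ∧ SetOfType A 4) ↔ (DMaximal A ∧ StronglyRSeparable A) :=
  stmt_17_general A
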